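/- Let α ∈ (0, π/2), Δ = Δ(α) and let {T_t}_{t∈Δ} be a C₀-semigroup on a Banach space X. Then the following are equivalent: (1) {T_t}_{t∈Δ} is distributionally sensitive; (2) {T_t}_{t∈Δ} admits a distributionally unbounded vector; (3) the set of all distributionally unbounded vectors is a dense Gδ subset of X. -/

import Mathlib

open MeasureTheory Filter Set

noncomputable section

/-- The complex sector `Δ(α) = {r e^{iθ} : r ≥ 0, |θ| ≤ α}`. -/
def sector (α : ℝ) : Set ℂ := {z : ℂ | |Complex.arg z| ≤ α}

/-- `Δ_r = {t ∈ Δ(α) : |t| < r}`. -/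
def sectorBall (α r : ℝ) : Set ℂ := {z ∈ sector α | ‖z‖ < r}

/-- Upper density of a set `A` with respect to the sector `Δ(α)`. -/
def udens (α : ℝ) (A : Set ℂ) : ℝ :=
  limsup (fun r : ℝ =>
    (volume (A ∩ sectorBall α r)).toReal / (volume (sectorBall α r)).toReal) atTop

/-- Lower density of a set `A` with respect to the sector `Δ(α)`. -/
def ldens (α : ℝ) (A : Set ℂ) : ℝ :=
  liminf (fun r : ℝ =>
    (volume (A ∩ sectorBall α r)).toReal / (volume (sectorBall α r)).toReal) atTop

/-- The filter expressing `|t| → ∞` along `t ∈ A`. -/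
def alongAbs (A : Set ℂ) : Filter ℂ :=
  (atTop.comap (fun z : ℂ => ‖z‖)) ⊓ 𝓟 A

/-- A `C₀`-semigroup of continuous linear operators indexed by the sector `Δ(α)`. -/
structure CZeroSemigroup (α : ℝ) (𝕜 X : Type*) [NontriviallyNormedField 𝕜]
    [NormedAddCommGroup X] [NormedSpace 𝕜 X] where
  T : ℂ → X →L[𝕜] X
  map_zero' : T 0 = ContinuousLinearMap.id 𝕜 X
  map_add' : ∀ s ∈ sector α, ∀ t ∈ sector α, T (s + t) = (T s).comp (T t)
  cont' : ∀ x : X, ContinuousOn (fun t => T t x) (sector α)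

variable {α : ℝ} {𝕜 X : Type*} [NontriviallyNormedField 𝕜]
  [NormedAddCommGroup X] [NormedSpace 𝕜 X]

/-- Distributional sensitivity. -/
def DistSensitive (S : CZeroSemigroup α 𝕜 X) : Prop :=
  ∃ δ > (0:ℝ), ∀ x : X, ∀ ε > (0:ℝ), ∃ y : X, ‖x - y‖ < ε ∧
    udens α {t ∈ sector α | δ < ‖S.T t x - S.T t y‖} = 1

/-- Distributionally unbounded vector. -/
def DistUnbounded (S : CZeroSemigroup α 𝕜 X) (x : X) : Prop :=
  ∃ A : Set ℂ, A ⊆ sector α ∧ MeasurableSet A ∧ udens α A = 1 ∧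
    Tendsto (fun t => ‖S.T t x‖) (alongAbs A) atTop

/-- Distributionally semi-irregular vector. -/
def DistSemiIrregular (S : CZeroSemigroup α 𝕜 X) (x : X) : Prop :=
  ∃ A B : Set ℂ, A ⊆ sector α ∧ B ⊆ sector α ∧ MeasurableSet A ∧ MeasurableSet B ∧
    udens α A = 1 ∧ udens α B = 1 ∧
    Tendsto (fun t => ‖S.T t x‖) (alongAbs A) (nhds 0) ∧
    ∃ δ > (0:ℝ), ∀ t ∈ B, δ ≤ ‖S.T t x‖

/-- Distributionally irregular vector. -/
def DistIrregular (S : CZeroSemigroup α 𝕜 X) (x : X) : Prop :=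
  ∃ A B : Set ℂ, A ⊆ sector α ∧ B ⊆ sector α ∧ MeasurableSet A ∧ MeasurableSet B ∧
    udens α A = 1 ∧ udens α B = 1 ∧
    Tendsto (fun t => ‖S.T t x‖) (alongAbs A) (nhds 0) ∧
    Tendsto (fun t => ‖S.T t x‖) (alongAbs B) atTop

/-- Distributionally chaotic pair. -/
def DistChaoticPair (S : CZeroSemigroup α 𝕜 X) (x y : X) : Prop :=
  ∃ δ > (0:ℝ), ∀ ε > (0:ℝ),
    udens α {t ∈ sector α | ‖S.T t x - S.T t y‖ < ε} = 1 ∧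
    udens α {t ∈ sector α | δ < ‖S.T t x - S.T t y‖} = 1

/-- Distributionally scrambled set. -/
def DistScrambled (S : CZeroSemigroup α 𝕜 X) (K : Set X) : Prop :=
  ∀ x ∈ K, ∀ y ∈ K, x ≠ y → DistChaoticPair S x y

/-!
For `m, n : ℕ` let `Y m n` be the set of `x` such that `‖T_t x‖ > m` on a proportion greater
than `1 - 1/(n+1)` of some `Δ_r` with `r ≥ n`. Each `Y m n` is open, because every `T_t` is
continuous and Lebesgue measure is continuous along increasing unions, and a diagonal choice of
radii shows that `⋂ Y m n` is exactly the set of distributionally unbounded vectors.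

If the semigroup is distributionally sensitive then, after rescaling, there are arbitrarily small
`v` with `‖T_t v‖ > 2m` on a set of upper density one. For such `t` at most one of the vectors
`x + ξ^j v` (`‖ξ‖ ≥ 2`, `j < 2n + 3`) can have `‖T_t (x + ξ^j v)‖ ≤ m`, so by pigeonhole one of
them lies in `Y m n`: every `Y m n` is dense, and Baire's theorem applies. Conversely, if `x₀` is
distributionally unbounded, then `x + c x₀` with small `c ≠ 0` witnesses sensitivity at `x`.
-/

open Metric
open scoped Pointwise Topology

lemma measurableSet_sector (α : ℝ) : MeasurableSet (sector α) :=
  measurableSet_le (continuous_abs.measurable.comp Complex.measurable_arg) measurable_const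

lemma measurableSet_sectorBall (α r : ℝ) : MeasurableSet (sectorBall α r) :=
  (measurableSet_sector α).inter (measurableSet_lt measurable_norm measurable_const)

lemma sectorBall_subset_ball (α r : ℝ) : sectorBall α r ⊆ ball 0 r := fun z hz => by
  simpa using hz.2

lemma volume_sectorBall_lt_top (α r : ℝ) : volume (sectorBall α r) < ⊤ :=
  (measure_mono (sectorBall_subset_ball α r)).trans_lt measure_ball_lt_top

lemma volume_inter_sectorBall_ne_top (D : Set ℂ) (α r : ℝ) : volume (D ∩ sectorBall α r) ≠ ⊤ :=
  ((measure_mono inter_subset_right).trans_lt (volume_sectorBall_lt_top α r)).ne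

lemma sectorBall_eq_smul (α : ℝ) {r : ℝ} (hr : 0 < r) :
    sectorBall α r = r • sectorBall α 1 := by
  ext z
  rw [mem_smul_set_iff_inv_smul_mem₀ hr.ne']
  have harg : Complex.arg (r⁻¹ • z) = Complex.arg z := by
    rw [Complex.real_smul, Complex.arg_real_mul z (inv_pos.mpr hr)]
  change (|z.arg| ≤ α ∧ ‖z‖ < r) ↔ (|(r⁻¹ • z).arg| ≤ α ∧ ‖r⁻¹ • z‖ < 1)
  rw [harg, norm_smul, norm_inv, Real.norm_of_nonneg hr.le, inv_mul_lt_one₀ hr]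

lemma volume_sectorBall_one_pos {α : ℝ} (hα : 0 < α) : 0 < volume (sectorBall α 1) := by
  set U := Complex.slitPlane ∩ Complex.arg ⁻¹' Ioo (-α) α ∩ ball 0 1
  have hU_open : IsOpen U :=
    (Complex.continuousOn_arg.isOpen_inter_preimage Complex.isOpen_slitPlane isOpen_Ioo).inter
      isOpen_ball
  have hU_half : ((1 / 2 : ℝ) : ℂ) ∈ U := by
    refine ⟨⟨Complex.ofReal_mem_slitPlane.mpr (by norm_num), ?_⟩, by norm_num⟩
    rw [mem_preimage, Complex.arg_ofReal_of_nonneg (by norm_num)]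
    exact ⟨neg_neg_of_pos hα, hα⟩
  refine (hU_open.measure_pos volume ⟨_, hU_half⟩).trans_le (measure_mono ?_)
  rintro z ⟨⟨-, hz⟩, hz1⟩
  exact ⟨abs_le.mpr ⟨hz.1.le, hz.2.le⟩, by simpa using hz1⟩

lemma tendsto_volume_sectorBall {α : ℝ} (hα : 0 < α) :
    Tendsto (fun r => volume.real (sectorBall α r)) atTop atTop := by
  have hpos : 0 < volume.real (sectorBall α 1) :=
    ENNReal.toReal_pos (volume_sectorBall_one_pos hα).ne' (volume_sectorBall_lt_top α 1).ne
  refine ((tendsto_pow_atTop two_ne_zero).atTop_mul_const hpos).congr' ?_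
  filter_upwards [eventually_gt_atTop 0] with r hr
  rw [sectorBall_eq_smul α hr, measureReal_def, measureReal_def,
    Measure.addHaar_smul_of_nonneg _ hr.le, Complex.finrank_real_complex, ENNReal.toReal_mul,
    ENNReal.toReal_ofReal (by positivity)]

def densityRatio (α : ℝ) (A : Set ℂ) (r : ℝ) : ℝ :=
  volume.real (A ∩ sectorBall α r) / volume.real (sectorBall α r)

lemma udens_eq_limsup (α : ℝ) (A : Set ℂ) : udens α A = limsup (densityRatio α A) atTop := rfl

section DensityRatio

variable {A B C : Set ℂ} {r : ℝ}

lemma densityRatio_nonneg (α : ℝ) (A : Set ℂ) (r : ℝ) : 0 ≤ densityRatio α A r := by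
  unfold densityRatio
  positivity

lemma densityRatio_le_one (α : ℝ) (A : Set ℂ) (r : ℝ) : densityRatio α A r ≤ 1 :=
  div_le_one_of_le₀ (measureReal_mono inter_subset_right (volume_sectorBall_lt_top α r).ne)
    measureReal_nonneg

lemma densityRatio_mono (h : A ⊆ B) (r : ℝ) : densityRatio α A r ≤ densityRatio α B r := by
  unfold densityRatio
  gcongr
  exact volume_inter_sectorBall_ne_top B α r

lemma densityRatio_le_add (h : A ∩ sectorBall α r ⊆ B ∪ C) :
    densityRatio α A r ≤ densityRatio α B r + densityRatio α C r := by
  unfold densityRatio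
  rw [← add_div]
  gcongr
  calc volume.real (A ∩ sectorBall α r)
      ≤ volume.real (B ∩ sectorBall α r ∪ C ∩ sectorBall α r) :=
        measureReal_mono (fun t ht => (h ht).imp (⟨·, ht.2⟩) (⟨·, ht.2⟩))
          (measure_union_ne_top (volume_inter_sectorBall_ne_top B α r)
            (volume_inter_sectorBall_ne_top C α r))
    _ ≤ _ := measureReal_union_le _ _

lemma tendsto_densityRatio_iUnion {F : ℕ → Set ℂ} (hF : Monotone F) (r : ℝ) :
    Tendsto (fun k => densityRatio α (F k) r) atTop (𝓝 (densityRatio α (⋃ k, F k) r)) := by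
  have hmeas := tendsto_measure_iUnion_atTop (μ := volume)
    (fun i j hij => inter_subset_inter_left (sectorBall α r) (hF hij))
  rw [← iUnion_inter] at hmeas
  exact ((ENNReal.tendsto_toReal (volume_inter_sectorBall_ne_top _ α r)).comp hmeas).div_const _

lemma exists_densityRatio_le_of_pairwiseDisjoint {ι : Type*} {s : Finset ι} (hs : s.Nonempty)
    {D : ι → Set ℂ} (hmeas : ∀ i, MeasurableSet (D i)) (hdisj : (s : Set ι).PairwiseDisjoint D)
    (r : ℝ) : ∃ i ∈ s, densityRatio α (D i) r ≤ 1 / s.card := by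
  refine Finset.exists_le_of_sum_le hs ?_
  have hunion : ∑ i ∈ s, densityRatio α (D i) r = densityRatio α (⋃ i ∈ s, D i) r := by
    rw [densityRatio, iUnion₂_inter, measureReal_biUnion_finset
      (hdisj.mono fun i => inter_subset_left)
      (fun i _ => (hmeas i).inter (measurableSet_sectorBall α r))
      (fun i _ => volume_inter_sectorBall_ne_top _ α r), Finset.sum_div]
    rfl
  rw [hunion, Finset.sum_const, nsmul_eq_mul,
    mul_one_div_cancel (by exact_mod_cast hs.card_ne_zero)]
  exact densityRatio_le_one α _ r

lemma tendsto_densityRatio_closedBall (hα : 0 < α) (R : ℝ) :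
    Tendsto (densityRatio α (closedBall 0 R)) atTop (𝓝 0) := by
  refine tendsto_of_tendsto_of_tendsto_of_le_of_le tendsto_const_nhds
    ((tendsto_const_nhds (x := volume.real (closedBall (0 : ℂ) R))).div_atTop
      (tendsto_volume_sectorBall hα)) (densityRatio_nonneg α _) fun r => ?_
  unfold densityRatio
  gcongr
  · exact measure_closedBall_lt_top.ne
  · exact inter_subset_left

end DensityRatio

section UpperDensity

variable {A B : Set ℂ}

lemma udens_eq_one_iff :
    udens α A = 1 ↔ ∀ ε > 0, ∃ᶠ r in atTop, 1 - ε < densityRatio α A r := by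
  have hbdd : IsBoundedUnder (· ≤ ·) atTop (densityRatio α A) :=
    isBoundedUnder_of ⟨1, densityRatio_le_one α A⟩
  have hcobdd : IsCoboundedUnder (· ≤ ·) atTop (densityRatio α A) :=
    (isBoundedUnder_of ⟨0, densityRatio_nonneg α A⟩).isCoboundedUnder_le
  rw [udens_eq_limsup]
  refine ⟨fun h ε hε => frequently_lt_of_lt_limsup hcobdd (by linarith), fun h => ?_⟩
  refine le_antisymm (limsup_le_of_le hcobdd (.of_forall (densityRatio_le_one α A))) ?_
  exact le_of_forall_sub_le fun ε hε =>
    le_limsup_of_frequently_le ((h ε hε).mono fun _ => le_of_lt) hbdd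

lemma udens_eq_one_iff_forall_nat :
    udens α A = 1 ↔ ∀ n : ℕ, ∃ r ≥ (n : ℝ), 1 - 1 / ((n : ℝ) + 1) < densityRatio α A r := by
  rw [udens_eq_one_iff]
  refine ⟨fun h n => frequently_atTop.mp (h _ Nat.one_div_pos_of_nat) n, fun h ε hε => ?_⟩
  refine frequently_atTop.mpr fun R => ?_
  obtain ⟨n, hn_small, hn_large⟩ := ((tendsto_one_div_add_atTop_nhds_zero_nat.eventually
    (gt_mem_nhds hε)).and (tendsto_natCast_atTop_atTop.eventually_ge_atTop R)).exists
  obtain ⟨r, hr, hratio⟩ := h n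
  exact ⟨r, hn_large.trans hr, by linarith⟩

lemma udens_eq_one_of_subset (h : udens α A = 1) (hAB : A ⊆ B) : udens α B = 1 :=
  udens_eq_one_iff.mpr fun ε hε =>
    (udens_eq_one_iff.mp h ε hε).mono fun r hr => hr.trans_le (densityRatio_mono hAB r)

lemma udens_diff_closedBall (hα : 0 < α) (h : udens α A = 1) (R : ℝ) :
    udens α (A \ closedBall 0 R) = 1 := by
  refine udens_eq_one_iff.mpr fun ε hε => ?_
  have hsmall := (tendsto_densityRatio_closedBall hα R).eventually (gt_mem_nhds (half_pos hε))
  refine ((udens_eq_one_iff.mp h _ (half_pos hε)).and_eventually hsmall).mono ?_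
  rintro r ⟨hA, hball⟩
  have hcover : A ∩ sectorBall α r ⊆ (A \ closedBall 0 R) ∪ closedBall 0 R := fun t ht =>
    (em (t ∈ closedBall 0 R)).symm.imp (fun hR => ⟨ht.1, hR⟩) id
  linarith [densityRatio_le_add hcover]

end UpperDensity

lemma eventually_alongAbs_iff {A : Set ℂ} {p : ℂ → Prop} :
    (∀ᶠ t in alongAbs A, p t) ↔ ∃ R, ∀ t ∈ A, R ≤ ‖t‖ → p t := by
  rw [alongAbs, eventually_inf_principal, eventually_comap, eventually_atTop]
  refine ⟨fun ⟨R, hR⟩ => ⟨R, fun t htA hR' => hR _ hR' t rfl htA⟩, fun ⟨R, hR⟩ => ⟨R, ?_⟩⟩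
  rintro b hb t rfl htA
  exact hR t htA hb

lemma udens_setOf_lt_of_tendsto (hα : 0 < α) {A : Set ℂ} (hA : A ⊆ sector α)
    (hud : udens α A = 1) {f : ℂ → ℝ} (hf : Tendsto f (alongAbs A) atTop) (M : ℝ) :
    udens α {t ∈ sector α | M < f t} = 1 := by
  obtain ⟨R, hR⟩ := eventually_alongAbs_iff.mp (hf.eventually_gt_atTop M)
  refine udens_eq_one_of_subset (udens_diff_closedBall hα hud R) ?_
  rintro t ⟨htA, htR⟩
  rw [mem_closedBall, dist_zero_right, not_le] at htR
  exact ⟨hA htA, hR t htA htR.le⟩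

lemma exists_udens_eq_one_eventually_subset (hα : 0 < α) {B : ℕ → Set ℂ} (hanti : Antitone B)
    (hmeas : ∀ m, MeasurableSet (B m)) (hB : ∀ m, udens α (B m) = 1) :
    ∃ A ⊆ B 0, MeasurableSet A ∧ udens α A = 1 ∧ ∀ m, ∃ R, ∀ t ∈ A, R ≤ ‖t‖ → t ∈ B m := by
  have hstep : ∀ (k : ℕ) (s : ℝ), ∃ r, s + 1 ≤ r ∧
      1 - 1 / ((k : ℝ) + 1) < densityRatio α (B k) r ∧
      densityRatio α (closedBall 0 s) r < 1 / ((k : ℝ) + 1) := fun k s =>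
    (((udens_eq_one_iff.mp (hB k) _ Nat.one_div_pos_of_nat).and_eventually
      ((eventually_ge_atTop (s + 1)).and ((tendsto_densityRatio_closedBall hα s).eventually
        (gt_mem_nhds Nat.one_div_pos_of_nat)))).exists).imp
      fun _ ⟨hdense, hge, hsmall⟩ => ⟨hge, hdense, hsmall⟩
  choose next hnext_ge hnext_dense hnext_small using hstep
  let ρ : ℕ → ℝ := fun k => Nat.rec (0 : ℝ) next k
  have hρ_succ : ∀ k, ρ (k + 1) = next k (ρ k) := fun _ => rfl
  have hρ_mono : StrictMono ρ :=
    strictMono_nat_of_lt_succ fun k => by linarith [hρ_succ k, hnext_ge k (ρ k)]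
  have hρ_ge : ∀ k : ℕ, (k : ℝ) ≤ ρ k := by
    intro k
    induction k with
    | zero => exact (Nat.cast_zero (R := ℝ)).le
    | succ k ih => push_cast; linarith [hρ_succ k, hnext_ge k (ρ k)]
  set A := ⋃ k, B k ∩ (ball 0 (ρ (k + 1)) \ closedBall 0 (ρ k))
  refine ⟨A, iUnion_subset fun k => inter_subset_left.trans (hanti (Nat.zero_le k)),
    .iUnion fun k => (hmeas k).inter (measurableSet_ball.diff measurableSet_closedBall), ?_, ?_⟩
  · refine udens_eq_one_iff.mpr fun ε hε => frequently_atTop.mpr fun R => ?_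
    obtain ⟨k, hk_small, hk_large⟩ := (((tendsto_one_div_add_atTop_nhds_zero_nat).eventually
      (gt_mem_nhds (half_pos hε))).and (tendsto_natCast_atTop_atTop.eventually_ge_atTop R)).exists
    refine ⟨ρ (k + 1), hk_large.trans ((hρ_ge k).trans (hρ_mono (Nat.lt_succ_self k)).le), ?_⟩
    have hcover : B k ∩ sectorBall α (ρ (k + 1)) ⊆ A ∪ closedBall 0 (ρ k) := fun t ht =>
      (em (t ∈ closedBall 0 (ρ k))).symm.imp
        (fun htk => mem_iUnion.mpr ⟨k, ht.1, by simpa using ht.2.2, htk⟩) id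
    have := densityRatio_le_add hcover
    have := hnext_dense k (ρ k)
    have := hnext_small k (ρ k)
    rw [← hρ_succ] at *
    linarith
  · refine fun m => ⟨ρ m, fun t ht htm => ?_⟩
    obtain ⟨k, hBk, htk, -⟩ := mem_iUnion.mp ht
    have hmk : m < k + 1 := hρ_mono.lt_iff_lt.mp (htm.trans_lt (by simpa using htk))
    exact hanti (Nat.lt_succ_iff.mp hmk) hBk

lemma isOpen_setOf_lt_densityRatio {P : Type*} [PseudoMetricSpace P] {E : P → Set ℂ}
    (hE : ∀ t, IsOpen {x | t ∈ E x}) (θ r : ℝ) : IsOpen {x | θ < densityRatio α (E x) r} := by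
  refine Metric.isOpen_iff.mpr fun x hx => ?_
  set F : ℕ → Set ℂ := fun k => {t ∈ E x | ball x (1 / (k + 1)) ⊆ {x' | t ∈ E x'}}
  have hF_mono : Monotone F := fun i j hij t ht =>
    ⟨ht.1, (ball_subset_ball (Nat.one_div_le_one_div hij)).trans ht.2⟩
  have hF_union : ⋃ k, F k = E x := by
    refine subset_antisymm (iUnion_subset fun k => sep_subset _ _) fun t ht => ?_
    obtain ⟨δ, hδ, hball⟩ := Metric.isOpen_iff.mp (hE t) x ht
    obtain ⟨k, hk⟩ := exists_nat_one_div_lt hδ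
    exact mem_iUnion.mpr ⟨k, ht, (ball_subset_ball hk.le).trans hball⟩
  have hlim := tendsto_densityRatio_iUnion (α := α) hF_mono r
  rw [hF_union] at hlim
  obtain ⟨k, hk⟩ := (hlim.eventually (lt_mem_nhds hx)).exists
  exact ⟨1 / (k + 1), Nat.one_div_pos_of_nat,
    fun x' hx' => hk.trans_le (densityRatio_mono (fun t ht => ht.2 hx') r)⟩

lemma one_le_norm_pow_sub_pow {ξ : 𝕜} (hξ : 2 ≤ ‖ξ‖) {i j : ℕ} (hij : i ≠ j) :
    1 ≤ ‖ξ ^ i - ξ ^ j‖ := by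
  wlog hlt : i < j generalizing i j
  · rw [norm_sub_rev]
    exact this hij.symm (lt_of_le_of_ne (not_lt.mp hlt) hij.symm)
  obtain ⟨k, rfl⟩ := Nat.exists_eq_add_of_lt hlt
  have hpow_i : 1 ≤ ‖ξ‖ ^ i := one_le_pow₀ (by linarith)
  have hpow_k : 2 ≤ ‖ξ‖ ^ (k + 1) := hξ.trans (le_self_pow₀ (by linarith) k.succ_ne_zero)
  have hdiff : ‖ξ ^ (k + 1)‖ - ‖(1 : 𝕜)‖ ≤ ‖ξ ^ (k + 1) - 1‖ := norm_sub_norm_le _ _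
  rw [norm_one, norm_pow] at hdiff
  calc 1 ≤ ‖ξ‖ ^ i * ‖ξ ^ (k + 1) - 1‖ := by nlinarith
    _ = ‖ξ ^ i - ξ ^ (i + k + 1)‖ := by
      rw [norm_sub_rev, ← norm_pow, ← norm_mul, mul_sub, mul_one, ← pow_add, add_assoc]

namespace CZeroSemigroup

def superlevel (S : CZeroSemigroup α 𝕜 X) (x : X) (M : ℝ) : Set ℂ :=
  {t ∈ sector α | M < ‖S.T t x‖}

def almostUnboundedSet (S : CZeroSemigroup α 𝕜 X) (m n : ℕ) : Set X :=
  ⋃ r ≥ (n : ℝ), {x | 1 - 1 / ((n : ℝ) + 1) < densityRatio α (S.superlevel x m) r}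

variable (S : CZeroSemigroup α 𝕜 X)

lemma measurableSet_superlevel (x : X) (M : ℝ) : MeasurableSet (S.superlevel x M) := by
  obtain ⟨u, hu, heq⟩ := continuousOn_iff'.mp (S.cont' x).norm (Ioi M) isOpen_Ioi
  have hsuper : S.superlevel x M = u ∩ sector α := by
    rw [← heq]
    exact inter_comm _ _
  rw [hsuper]
  exact hu.measurableSet.inter (measurableSet_sector α)

lemma isOpen_setOf_mem_superlevel (t : ℂ) (M : ℝ) : IsOpen {x | t ∈ S.superlevel x M} :=
  isOpen_const.inter (isOpen_lt continuous_const (S.T t).continuous.norm)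

lemma superlevel_antitone (x : X) : Antitone (S.superlevel x) :=
  fun _ _ hMM' _ ht => ⟨ht.1, hMM'.trans_lt ht.2⟩

lemma disjoint_superlevel_diff (x v : X) (m : ℝ) {a b : 𝕜} (hab : 1 ≤ ‖a - b‖) :
    Disjoint (S.superlevel v (2 * m) \ S.superlevel (x + a • v) m)
      (S.superlevel v (2 * m) \ S.superlevel (x + b • v) m) := by
  rw [Set.disjoint_left]
  rintro t ⟨⟨ht, hv⟩, ha⟩ ⟨-, hb⟩
  have ha' : ‖S.T t (x + a • v)‖ ≤ m := not_lt.mp fun h => ha ⟨ht, h⟩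
  have hb' : ‖S.T t (x + b • v)‖ ≤ m := not_lt.mp fun h => hb ⟨ht, h⟩
  have hsub : S.T t (x + a • v) - S.T t (x + b • v) = (a - b) • S.T t v := by
    rw [map_add, map_add, map_smul, map_smul, sub_smul]
    abel
  have htri := norm_sub_le (S.T t (x + a • v)) (S.T t (x + b • v))
  rw [hsub, norm_smul] at htri
  nlinarith [norm_nonneg (S.T t v)]

lemma distUnbounded_iff_forall_udens (hα : 0 < α) (x : X) :
    DistUnbounded S x ↔ ∀ m : ℕ, udens α (S.superlevel x m) = 1 := by
  refine ⟨fun ⟨A, hA, _, hud, htend⟩ m => udens_setOf_lt_of_tendsto hα hA hud htend m,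
    fun h => ?_⟩
  obtain ⟨A, hA0, hAmeas, hud, htail⟩ := exists_udens_eq_one_eventually_subset hα
    (fun _ _ hmm' => S.superlevel_antitone x (Nat.cast_le.mpr hmm'))
    (fun m => S.measurableSet_superlevel x m) h
  refine ⟨A, hA0.trans (sep_subset _ _), hAmeas, hud,
    tendsto_atTop.mpr fun b => eventually_alongAbs_iff.mpr ?_⟩
  obtain ⟨m, hm⟩ := exists_nat_ge b
  obtain ⟨R, hR⟩ := htail m
  exact ⟨R, fun t ht htR => hm.trans (hR t ht htR).2.le⟩

lemma isOpen_almostUnboundedSet (m n : ℕ) : IsOpen (S.almostUnboundedSet m n) :=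
  isOpen_biUnion fun r _ =>
    isOpen_setOf_lt_densityRatio (fun t => S.isOpen_setOf_mem_superlevel t m) _ r

lemma setOf_distUnbounded_eq_iInter (hα : 0 < α) :
    {x | DistUnbounded S x} = ⋂ p : ℕ × ℕ, S.almostUnboundedSet p.1 p.2 := by
  ext x
  simp only [mem_iInter, Prod.forall, almostUnboundedSet, mem_iUnion₂, mem_ofPred_eq,
    exists_prop, distUnbounded_iff_forall_udens S hα, udens_eq_one_iff_forall_nat]

lemma exists_add_smul_mem_almostUnboundedSet (x v : X) (m n : ℕ)
    (hv : udens α (S.superlevel v (2 * m)) = 1) {ξ : 𝕜} (hξ : 2 ≤ ‖ξ‖) :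
    ∃ j < 2 * n + 3, x + ξ ^ j • v ∈ S.almostUnboundedSet m n := by
  set N := 2 * n + 3
  have hN : (0 : ℝ) < 1 / N := by positivity
  obtain ⟨r, hr_ratio, hr_n⟩ :=
    ((udens_eq_one_iff.mp hv _ hN).and_eventually (eventually_ge_atTop (n : ℝ))).exists
  set bad : ℕ → Set ℂ := fun j => S.superlevel v (2 * m) \ S.superlevel (x + ξ ^ j • v) m
  obtain ⟨j, hj, hbad⟩ := exists_densityRatio_le_of_pairwiseDisjoint (α := α)
    (Finset.nonempty_range_iff.mpr (by omega : N ≠ 0))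
    (fun j => (S.measurableSet_superlevel _ _).diff (S.measurableSet_superlevel _ _))
    (fun i _ j _ hij => S.disjoint_superlevel_diff x v m (one_le_norm_pow_sub_pow hξ hij)) r
  rw [Finset.card_range] at hbad
  refine ⟨j, Finset.mem_range.mp hj, mem_iUnion₂.mpr ⟨r, hr_n, ?_⟩⟩
  have hcover :
      S.superlevel v (2 * m) ∩ sectorBall α r ⊆ S.superlevel (x + ξ ^ j • v) m ∪ bad j :=
    fun t ht => (em _).imp id fun hgood => ⟨ht.1, hgood⟩
  have hsplit := densityRatio_le_add hcover
  have hbad' : densityRatio α (bad j) r ≤ 1 / N := hbad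
  have hN' : 1 / (N : ℝ) + 1 / N < 1 / ((n : ℝ) + 1) := by
    rw [← add_div, div_lt_div_iff₀ (by positivity) (by positivity)]
    push_cast [N]
    linarith
  change 1 - 1 / ((n : ℝ) + 1) < densityRatio α (S.superlevel (x + ξ ^ j • v) m) r
  linarith

end CZeroSemigroup

variable {S : CZeroSemigroup α 𝕜 X}

lemma DistUnbounded.distSensitive (hα : 0 < α) {x₀ : X} (h : DistUnbounded S x₀) :
    DistSensitive S := by
  obtain ⟨A, hA, -, hud, htend⟩ := h
  refine ⟨1, one_pos, fun x ε hε => ?_⟩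
  obtain ⟨c, hc0, hcε⟩ :=
    NormedField.exists_norm_lt 𝕜 (div_pos hε (by positivity : 0 < ‖x₀‖ + 1))
  refine ⟨x + c • x₀, ?_, ?_⟩
  · rw [sub_add_cancel_left, norm_neg, norm_smul]
    calc ‖c‖ * ‖x₀‖ ≤ ‖c‖ * (‖x₀‖ + 1) := by gcongr; linarith
      _ < ε := (lt_div_iff₀ (by positivity)).mp hcε
  · have hset : {t ∈ sector α | 1 < ‖S.T t x - S.T t (x + c • x₀)‖} =
        {t ∈ sector α | 1 < ‖c‖ * ‖S.T t x₀‖} := by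
      refine Set.ext fun t => and_congr_right fun _ => ?_
      rw [map_add, map_smul, sub_add_cancel_left, norm_neg, norm_smul]
    rw [hset]
    exact udens_setOf_lt_of_tendsto hα hA hud (htend.const_mul_atTop hc0) 1

lemma DistSensitive.exists_udens_superlevel (hS : DistSensitive S) (M : ℝ) {ε : ℝ}
    (hε : 0 < ε) : ∃ v : X, ‖v‖ < ε ∧ udens α (S.superlevel v M) = 1 := by
  obtain ⟨δ, hδ, hsens⟩ := hS
  obtain ⟨c, hc⟩ := NormedField.exists_lt_norm 𝕜 (|M| / δ)
  have hc0 : 0 < ‖c‖ := (div_nonneg (abs_nonneg M) hδ.le).trans_lt hc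
  obtain ⟨y, hy, hud⟩ := hsens 0 (ε / ‖c‖) (div_pos hε hc0)
  refine ⟨c • y, ?_, udens_eq_one_of_subset hud ?_⟩
  · rw [zero_sub, norm_neg] at hy
    rw [norm_smul]
    exact (lt_div_iff₀' hc0).mp hy
  · rintro t ⟨ht, hδt⟩
    rw [map_zero, zero_sub, norm_neg] at hδt
    refine ⟨ht, ?_⟩
    rw [map_smul, norm_smul]
    calc M ≤ |M| / δ * δ := by rw [div_mul_cancel₀ _ hδ.ne']; exact le_abs_self M
      _ < ‖c‖ * ‖S.T t y‖ := mul_lt_mul hc hδt.le hδ hc0.le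

lemma DistSensitive.dense_almostUnboundedSet (hS : DistSensitive S) (m n : ℕ) :
    Dense (S.almostUnboundedSet m n) := by
  obtain ⟨ξ, hξ⟩ := NormedField.exists_lt_norm 𝕜 2
  have hξN : 0 < ‖ξ‖ ^ (2 * n + 3) := pow_pos (by linarith) _
  refine Metric.dense_iff.mpr fun x ε hε => ?_
  obtain ⟨v, hv, hud⟩ := hS.exists_udens_superlevel (2 * m) (div_pos hε hξN)
  obtain ⟨j, hj, hmem⟩ := S.exists_add_smul_mem_almostUnboundedSet x v m n hud hξ.le
  refine ⟨_, ?_, hmem⟩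
  rw [mem_ball, dist_eq_norm, add_sub_cancel_left, norm_smul, norm_pow]
  calc ‖ξ‖ ^ j * ‖v‖ ≤ ‖ξ‖ ^ (2 * n + 3) * ‖v‖ := by gcongr; linarith
    _ < ε := (lt_div_iff₀' hξN).mp hv

theorem stmt_4_general (α : ℝ) (hα : 0 < α)
    {𝕜 X : Type*} [NontriviallyNormedField 𝕜] [NormedAddCommGroup X] [NormedSpace 𝕜 X]
    [CompleteSpace X] (S : CZeroSemigroup α 𝕜 X) :
    (DistSensitive S ↔ ∃ x : X, DistUnbounded S x) ∧
    (DistSensitive S ↔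
      (IsGδ {x : X | DistUnbounded S x} ∧ Dense {x : X | DistUnbounded S x})) := by
  have residual (hS : DistSensitive S) :
      IsGδ {x : X | DistUnbounded S x} ∧ Dense {x : X | DistUnbounded S x} := by
    rw [S.setOf_distUnbounded_eq_iInter hα]
    exact ⟨.iInter fun p => (S.isOpen_almostUnboundedSet p.1 p.2).isGδ,
      dense_iInter_of_isOpen (fun p => S.isOpen_almostUnboundedSet p.1 p.2)
        (fun p => hS.dense_almostUnboundedSet p.1 p.2)⟩
  have sensitive : (∃ x, DistUnbounded S x) → DistSensitive S :=
    fun ⟨_, hx⟩ => hx.distSensitive hα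
  exact ⟨⟨fun hS => (residual hS).2.nonempty, sensitive⟩,
    ⟨residual, fun h => sensitive h.2.nonempty⟩⟩

/-- Characterization of distributional sensitivity via distributionally unbounded vectors. -/
theorem stmt_4 (α : ℝ) (hα : 0 < α) (hα' : α < Real.pi / 2)
    {𝕜 X : Type*} [NontriviallyNormedField 𝕜] [NormedAddCommGroup X] [NormedSpace 𝕜 X]
    [CompleteSpace X] (S : CZeroSemigroup α 𝕜 X) :
    (DistSensitive S ↔ ∃ x : X, DistUnbounded S x) ∧
    (DistSensitive S ↔
      (IsGδ {x : X | DistUnbounded S x} ∧ Dense {x : X | DistUnbounded S x})) :=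
  stmt_4_general α hα S
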